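/- arXiv:1811.02769 — 3 statements merged into one kernel-verified Lean document; each statement's English description precedes it below -/
import Mathlib

section
/- For real numbers S_r > S_p ≥ 0, C ≥ 1, d_max ≥ 0, natural number R ≥ 1, if ALG ≤ 2(C + d_max·⌊log₂ R⌋)/((S_r - S_p)(1 + ⌊log₂ R⌋)), OPT ≥ (C-1)/((S_r+S_p)·R), and d_max/(S_r+S_p) ≤ OPT, then ALG ≤ (2(S_r+S_p)(R + ⌊log₂ R⌋)/((S_r - S_p)(1 + ⌊log₂ R⌋)))·OPT + 2/((S_r - S_p)(1 + ⌊log₂ R⌋)). -/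
lemma cells_add_depth_mul_le {v R L OPT C d : ℝ} (hv : 0 < v) (hR : 0 < R) (hL : 0 ≤ L)
    (hcells : (C - 1) / (v * R) ≤ OPT) (hdepth : d / v ≤ OPT) :
    C + d * L ≤ v * (R + L) * OPT + 1 := by
  have hC : C - 1 ≤ v * R * OPT := (div_le_iff₀' (mul_pos hv hR)).mp hcells
  have hd : d * L ≤ v * OPT * L :=
    mul_le_mul_of_nonneg_right ((div_le_iff₀' hv).mp hdepth) hL
  linarith

theorem competitive_ratio_grid_general
    (Sr Sp ALG OPT C dMax : ℝ) (R : ℕ)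
    (hSp : 0 ≤ Sp) (hSr : Sp < Sr) (hR : 1 ≤ R)
    (hALG : ALG ≤ 2 * (C + dMax * (Nat.log 2 R : ℝ)) /
      ((Sr - Sp) * (1 + (Nat.log 2 R : ℝ))))
    (hOPT : OPT ≥ (C - 1) / ((Sr + Sp) * (R : ℝ)))
    (hdOPT : dMax / (Sr + Sp) ≤ OPT) :
    ALG ≤ (2 * (Sr + Sp) * ((R : ℝ) + (Nat.log 2 R : ℝ)) /
        ((Sr - Sp) * (1 + (Nat.log 2 R : ℝ)))) * OPT +
      2 / ((Sr - Sp) * (1 + (Nat.log 2 R : ℝ))) := by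
  set L : ℝ := (Nat.log 2 R : ℝ)
  have hL : 0 ≤ L := Nat.cast_nonneg _
  have hD : 0 < (Sr - Sp) * (1 + L) := mul_pos (by linarith) (by linarith)
  have hwork : C + dMax * L ≤ (Sr + Sp) * (R + L) * OPT + 1 :=
    cells_add_depth_mul_le (by linarith) (by exact_mod_cast hR) hL hOPT hdOPT
  calc ALG ≤ 2 * (C + dMax * L) / ((Sr - Sp) * (1 + L)) := hALG
    _ ≤ 2 * ((Sr + Sp) * (R + L) * OPT + 1) / ((Sr - Sp) * (1 + L)) := by gcongr
    _ = (2 * (Sr + Sp) * (R + L) / ((Sr - Sp) * (1 + L))) * OPT +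
        2 / ((Sr - Sp) * (1 + L)) := by ring

/-- Competitive ratio of multi-robot recursive DFS over a grid polygon. -/
theorem competitive_ratio_grid
    (Sr Sp ALG OPT C dMax : ℝ) (R : ℕ)
    (hSp : 0 ≤ Sp) (hSr : Sp < Sr) (hR : 1 ≤ R) (hC : 1 ≤ C) (hd : 0 ≤ dMax)
    (hOPTpos : 0 < OPT)
    (hALG : ALG ≤ 2 * (C + dMax * (Nat.log 2 R : ℝ)) /
      ((Sr - Sp) * (1 + (Nat.log 2 R : ℝ))))
    (hOPT : OPT ≥ (C - 1) / ((Sr + Sp) * (R : ℝ)))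
    (hdOPT : dMax / (Sr + Sp) ≤ OPT) :
    ALG ≤ (2 * (Sr + Sp) * ((R : ℝ) + (Nat.log 2 R : ℝ)) /
        ((Sr - Sp) * (1 + (Nat.log 2 R : ℝ)))) * OPT +
      2 / ((Sr - Sp) * (1 + (Nat.log 2 R : ℝ))) :=
  competitive_ratio_grid_general Sr Sp ALG OPT C dMax R hSp hSr hR hALG hOPT hdOPT
end

section
/- Let S_r > S_p ≥ 0, R ∈ ℕ with R ≥ 1, d_max ≥ 0, and suppose ALG ≤ 2(C_out^ALG + d_max·⌊log₂ R⌋)/((S_r - S_p)(1 + ⌊log₂ R⌋)), C_out^ALG ≤ 3·C_in^ALG + 6, C_in^ALG ≤ 6·C_in^BEST, OPT ≥ (C_in^BEST - 1)/((S_r+S_p)·R), and d_max/(S_r+S_p) ≤ OPT. Then ALG ≤ (2(S_r+S_p)(18R + ⌊log₂ R⌋)/((S_r - S_p)(1 + ⌊log₂ R⌋)))·OPT + 48/((S_r - S_p)(1 + ⌊log₂ R⌋)). -/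
/-! Chaining the grid estimates gives `C_out ≤ 36 C_best + 6`, and the two lower bounds on `OPT`
turn `C_best - 1` and `d_max` into multiples of `OPT`; the additive constant `48 = 2 (36 + 6)`
collects what is left over. -/

lemma two_mul_cells_add_travel_le {Cout Cin Cbest d L s R OPT : ℝ}
    (hOut : Cout ≤ 3 * Cin + 6) (hIn : Cin ≤ 6 * Cbest)
    (hCbest : Cbest - 1 ≤ s * R * OPT) (hd : d ≤ s * OPT) (hL : 0 ≤ L) :
    2 * (Cout + d * L) ≤ 2 * s * (18 * R + L) * OPT + 48 := by
  linarith [mul_le_mul_of_nonneg_right hd hL]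

theorem competitive_ratio_arbitrary_general
    (Sr Sp ALG OPT Cout Cin Cbest dMax : ℝ) (R : ℕ)
    (hSp : 0 ≤ Sp) (hSr : Sp < Sr) (hR : 1 ≤ R)
    (hALG : ALG ≤ 2 * (Cout + dMax * (Nat.log 2 R : ℝ)) /
      ((Sr - Sp) * (1 + (Nat.log 2 R : ℝ))))
    (hOut : Cout ≤ 3 * Cin + 6)
    (hIn : Cin ≤ 6 * Cbest)
    (hOPT : OPT ≥ (Cbest - 1) / ((Sr + Sp) * (R : ℝ)))
    (hdOPT : dMax / (Sr + Sp) ≤ OPT) :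
    ALG ≤ (2 * (Sr + Sp) * (18 * (R : ℝ) + (Nat.log 2 R : ℝ)) /
        ((Sr - Sp) * (1 + (Nat.log 2 R : ℝ)))) * OPT +
      48 / ((Sr - Sp) * (1 + (Nat.log 2 R : ℝ))) := by
  set L : ℝ := (Nat.log 2 R : ℝ)
  have hL : 0 ≤ L := Nat.cast_nonneg _
  have hS : 0 < Sr + Sp := by linarith
  have hRpos : (0 : ℝ) < R := by exact_mod_cast hR
  have hCbest := (div_le_iff₀' (mul_pos hS hRpos)).mp hOPT
  have hd := (div_le_iff₀' hS).mp hdOPT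
  have hden : 0 ≤ (Sr - Sp) * (1 + L) := by
    apply mul_nonneg <;> linarith
  calc ALG ≤ 2 * (Cout + dMax * L) / ((Sr - Sp) * (1 + L)) := hALG
    _ ≤ (2 * (Sr + Sp) * (18 * R + L) * OPT + 48) / ((Sr - Sp) * (1 + L)) :=
        div_le_div_of_nonneg_right (two_mul_cells_add_travel_le hOut hIn hCbest hd hL) hden
    _ = _ := by ring

/-- Competitive ratio for an arbitrarily shaped fat ROI. -/
theorem competitive_ratio_arbitrary
    (Sr Sp ALG OPT Cout Cin Cbest dMax : ℝ) (R : ℕ)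
    (hSp : 0 ≤ Sp) (hSr : Sp < Sr) (hR : 1 ≤ R) (hd : 0 ≤ dMax)
    (hCbest : 1 ≤ Cbest) (hCout : 0 ≤ Cout) (hCin : 0 ≤ Cin)
    (hALG : ALG ≤ 2 * (Cout + dMax * (Nat.log 2 R : ℝ)) /
      ((Sr - Sp) * (1 + (Nat.log 2 R : ℝ))))
    (hOut : Cout ≤ 3 * Cin + 6)
    (hIn : Cin ≤ 6 * Cbest)
    (hOPT : OPT ≥ (Cbest - 1) / ((Sr + Sp) * (R : ℝ)))
    (hdOPT : dMax / (Sr + Sp) ≤ OPT) :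
    ALG ≤ (2 * (Sr + Sp) * (18 * (R : ℝ) + (Nat.log 2 R : ℝ)) /
        ((Sr - Sp) * (1 + (Nat.log 2 R : ℝ)))) * OPT +
      48 / ((Sr - Sp) * (1 + (Nat.log 2 R : ℝ))) :=
  competitive_ratio_arbitrary_general Sr Sp ALG OPT Cout Cin Cbest dMax R hSp hSr hR hALG hOut hIn
    hOPT hdOPT
end

section
/- An open square of side length 1 in the plane intersects the interiors of at most 4 cells of any axis-aligned unit grid if it is axis-aligned (a translated, unrotated square), and of at most 6 cells if it is arbitrarily rotated. -/
lemma core_nonneg (c s d e d' e' : ℝ) (hc : c^2+s^2 = 1) (hc0 : 0 ≤ c) (hs0 : 0 ≤ s)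
    (hd : d < 1) (he' : -1 < e) (he2' : -1 < e')
    (h1 : 1 < c*d - s*e) (h2 : 1 < c*d' - s*e')
    (h3 : 1 < s*(d - d') + c*(e - e')) : False := by
  have hcle : c ≤ 1 := by nlinarith [sq_nonneg s, sq_nonneg (c-1)]
  have hsle : s ≤ 1 := by nlinarith [sq_nonneg c, sq_nonneg (s-1)]
  rcases eq_or_lt_of_le hc0 with hceq | hcpos
  · have hs1 : s = 1 := by nlinarith [sq_nonneg (s-1)]
    rw [← hceq, hs1] at h1
    nlinarith
  rcases eq_or_lt_of_le hs0 with hseq | hspos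
  · have hc1 : c = 1 := by nlinarith [sq_nonneg (c-1)]
    rw [← hseq, hc1] at h1
    nlinarith
  have k1 : s*(s*d + c*e) ≤ 1 - c := by nlinarith [mul_lt_mul_of_pos_left h1 hcpos]
  have k2 : s - 1 ≤ c*(s*d' + c*e') := by nlinarith [mul_lt_mul_of_pos_left h2 hspos]
  have h3' := mul_lt_mul_of_pos_left h3 (mul_pos hcpos hspos)
  nlinarith [mul_nonneg (by linarith : (0:ℝ) ≤ 1 - c) (by linarith : (0:ℝ) ≤ 1 - s),
    mul_le_mul_of_nonneg_left k1 hcpos.le, mul_le_mul_of_nonneg_left k2 hspos.le]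

/-- general-sign core lemma: in a rotated unit square there are no three points
P, Q, W with Q more than 1 above P, and W more than 1 to the right of both. -/
lemma core' (c s d e d' e' : ℝ) (hc : c^2+s^2 = 1)
    (hd1 : -1 < d) (hd2 : d < 1) (he1 : -1 < e) (he2 : e < 1)
    (hd1' : -1 < d') (hd2' : d' < 1) (he1' : -1 < e') (he2' : e' < 1)
    (h1 : 1 < c*d - s*e) (h2 : 1 < c*d' - s*e')
    (h3 : 1 < s*(d - d') + c*(e - e')) : False := by
  rcases le_total 0 c with hc0 | hc0 <;> rcases le_total 0 s with hs0 | hs0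
  · exact core_nonneg c s d e d' e' hc hc0 hs0 hd2 he1 he1' h1 h2 h3
  · -- s < 0 : (c, -s, d', -e', d, -e)
    exact core_nonneg c (-s) d' (-e') d (-e) (by linear_combination hc) hc0
      (by linarith) hd2' (by linarith) (by linarith)
      (by linarith [h2]) (by linarith [h1]) (by nlinarith [h3])
  · -- c < 0 : (-c, s, -d', e', -d, e)
    exact core_nonneg (-c) s (-d') e' (-d) e (by linear_combination hc) (by linarith)
      hs0 (by linarith) he1' he1
      (by nlinarith [h2]) (by nlinarith [h1]) (by nlinarith [h3])
  · -- both neg : (-c, -s, -d, -e, -d', -e')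
    exact core_nonneg (-c) (-s) (-d) (-e) (-d') (-e') (by linear_combination hc)
      (by linarith) (by linarith) (by linarith) (by linarith) (by linarith)
      (by nlinarith [h1]) (by nlinarith [h2]) (by nlinarith [h3])

/-- diameter lemma: two points of the square cannot differ by more than 1 in
both world coordinates. -/
lemma diag_core (c s a b : ℝ) (hc : c^2 + s^2 = 1)
    (ha : -1 < a) (ha' : a < 1) (hb : -1 < b) (hb' : b < 1)
    (h1 : 1 < (c*a - s*b)^2) (h2 : 1 < (s*a + c*b)^2) : False := by
  nlinarith [sq_nonneg a, sq_nonneg b,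
    mul_pos (by linarith : (0:ℝ) < 1 - a) (by linarith : (0:ℝ) < 1 + a),
    mul_pos (by linarith : (0:ℝ) < 1 - b) (by linarith : (0:ℝ) < 1 + b)]


lemma ncard_le_six (M : Set (ℤ × ℤ)) (a b c d e f : ℤ × ℤ)
    (h : M ⊆ {a, b, c, d, e, f}) : M.ncard ≤ 6 := by
  have hf : ({a,b,c,d,e,f} : Set (ℤ × ℤ)).Finite :=
    (((((Set.finite_singleton f).insert e).insert d).insert c).insert b).insert a
  refine le_trans (Set.ncard_le_ncard h hf) ?_
  have h5 := Set.ncard_insert_le a ({b,c,d,e,f} : Set (ℤ×ℤ))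
  have h4 := Set.ncard_insert_le b ({c,d,e,f} : Set (ℤ×ℤ))
  have h3 := Set.ncard_insert_le c ({d,e,f} : Set (ℤ×ℤ))
  have h2 := Set.ncard_insert_le d ({e,f} : Set (ℤ×ℤ))
  have h1 := Set.ncard_insert_le e ({f} : Set (ℤ×ℤ))
  have h0 : ({f} : Set (ℤ×ℤ)).ncard = 1 := Set.ncard_singleton f
  omega

lemma ncard_le_four (M : Set (ℤ × ℤ)) (a b c d : ℤ × ℤ)
    (h : M ⊆ {a, b, c, d}) : M.ncard ≤ 4 := by
  have hf : ({a,b,c,d} : Set (ℤ × ℤ)).Finite :=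
    (((Set.finite_singleton d).insert c).insert b).insert a
  refine le_trans (Set.ncard_le_ncard h hf) ?_
  have h3 := Set.ncard_insert_le a ({b,c,d} : Set (ℤ×ℤ))
  have h2 := Set.ncard_insert_le b ({c,d} : Set (ℤ×ℤ))
  have h1 := Set.ncard_insert_le c ({d} : Set (ℤ×ℤ))
  have h0 : ({d} : Set (ℤ×ℤ)).ncard = 1 := Set.ncard_singleton d
  omega

lemma mul_mem_bounds (c x : ℝ) (h0 : 0 < x) (h1 : x < 1) :
    min 0 c ≤ c * x ∧ c * x ≤ max 0 c := by
  rcases le_total 0 c with h | h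
  · exact ⟨le_trans (min_le_left 0 c) (mul_nonneg h h0.le),
      le_trans (by nlinarith) (le_max_right 0 c)⟩
  · exact ⟨le_trans (min_le_right 0 c) (by nlinarith),
      le_trans (by nlinarith) (le_max_left 0 c)⟩

lemma width_le (c s : ℝ) (hc : c^2 + s^2 = 1) :
    (max 0 c - min 0 c) + (max 0 s - min 0 s) ≤ 3/2 := by
  rcases le_total 0 c with h | h <;> rcases le_total 0 s with h' | h' <;>
    simp only [max_eq_right, max_eq_left, min_eq_left, min_eq_right, h, h'] <;>
    nlinarith [sq_nonneg (c - s), sq_nonneg (c + s)]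

set_option maxHeartbeats 2000000 in
lemma main1 (c s tx ty : ℝ) (hc : c^2 + s^2 = 1) :
    {p : ℤ × ℤ | ∃ x y : ℝ, x ∈ Set.Ioo (0 : ℝ) 1 ∧ y ∈ Set.Ioo (0 : ℝ) 1 ∧
        c * x - s * y + tx ∈ Set.Ioo (p.1 : ℝ) ((p.1 : ℝ) + 1) ∧
        s * x + c * y + ty ∈ Set.Ioo (p.2 : ℝ) ((p.2 : ℝ) + 1)}.ncard ≤ 6 := by
  set S : Set (ℤ × ℤ) := {p : ℤ × ℤ | ∃ x y : ℝ, x ∈ Set.Ioo (0 : ℝ) 1 ∧ y ∈ Set.Ioo (0 : ℝ) 1 ∧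
        c * x - s * y + tx ∈ Set.Ioo (p.1 : ℝ) ((p.1 : ℝ) + 1) ∧
        s * x + c * y + ty ∈ Set.Ioo (p.2 : ℝ) ((p.2 : ℝ) + 1)} with hS
  set m : ℤ := ⌊tx + (min 0 c - max 0 s)⌋ with hm
  set n : ℤ := ⌊ty + (min 0 s + min 0 c)⌋ with hn
  have hwidth := width_le c s hc
  -- box bound
  have hbox : ∀ p : ℤ × ℤ, p ∈ S → m ≤ p.1 ∧ p.1 ≤ m + 2 ∧ n ≤ p.2 ∧ p.2 ≤ n + 2 := by
    rintro ⟨i, j⟩ ⟨x, y, hx, hy, h1, h2⟩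
    obtain ⟨hcx1, hcx2⟩ := mul_mem_bounds c x hx.1 hx.2
    obtain ⟨hsy1, hsy2⟩ := mul_mem_bounds s y hy.1 hy.2
    obtain ⟨hsx1, hsx2⟩ := mul_mem_bounds s x hx.1 hx.2
    obtain ⟨hcy1, hcy2⟩ := mul_mem_bounds c y hy.1 hy.2
    have hm1 : (m : ℝ) ≤ tx + (min 0 c - max 0 s) := Int.floor_le _
    have hm2 : tx + (min 0 c - max 0 s) < (m : ℝ) + 1 := Int.lt_floor_add_one _
    have hn1 : (n : ℝ) ≤ ty + (min 0 s + min 0 c) := Int.floor_le _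
    have hn2 : ty + (min 0 s + min 0 c) < (n : ℝ) + 1 := Int.lt_floor_add_one _
    have hi1 : (m : ℝ) < (i : ℝ) + 1 := by
      have := h1.2; simp only [Set.mem_Ioo] at h1; linarith [h1.2]
    have hi2 : (i : ℝ) < (m : ℝ) + 3 := by
      simp only [Set.mem_Ioo] at h1; linarith [h1.1]
    have hj1 : (n : ℝ) < (j : ℝ) + 1 := by
      simp only [Set.mem_Ioo] at h2; linarith [h2.2]
    have hj2 : (j : ℝ) < (n : ℝ) + 3 := by
      simp only [Set.mem_Ioo] at h2; linarith [h2.1]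
    have := (by exact_mod_cast (by push_cast; linarith [hi1] : ((m:ℝ)) < ((i+1 : ℤ) : ℝ)) : m < i + 1)
    have := (by exact_mod_cast (by push_cast; linarith [hi2] : ((i:ℝ)) < ((m+3 : ℤ) : ℝ)) : i < m + 3)
    have := (by exact_mod_cast (by push_cast; linarith [hj1] : ((n:ℝ)) < ((j+1 : ℤ) : ℝ)) : n < j + 1)
    have := (by exact_mod_cast (by push_cast; linarith [hj2] : ((j:ℝ)) < ((n+3 : ℤ) : ℝ)) : j < n + 3)
    simp only []
    omega
  -- diagonal exclusion
  have hdiag : ∀ i j i' j' : ℤ, (i, j) ∈ S → (i', j') ∈ S → i + 2 ≤ i' →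
      (j + 2 ≤ j' ∨ j' + 2 ≤ j) → False := by
    rintro i j i' j' ⟨x, y, hx, hy, hP1, hP2⟩ ⟨x', y', hx', hy', hQ1, hQ2⟩ hii hjj
    simp only [Set.mem_Ioo] at hP1 hP2 hQ1 hQ2
    have hii' : (i : ℝ) + 2 ≤ (i' : ℝ) := by exact_mod_cast hii
    have key1 : 1 < c * (x' - x) - s * (y' - y) := by linarith [hP1.2, hQ1.1]
    have key2 : 1 < (s * (x' - x) + c * (y' - y))^2 := by
      rcases hjj with h | h
      · have h' : (j : ℝ) + 2 ≤ (j' : ℝ) := by exact_mod_cast h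
        nlinarith [hP2.2, hQ2.1]
      · have h' : (j' : ℝ) + 2 ≤ (j : ℝ) := by exact_mod_cast h
        nlinarith [hP2.1, hQ2.2]
    exact diag_core c s (x' - x) (y' - y) hc
      (by linarith [hx.1, hx.2, hx'.1, hx'.2]) (by linarith [hx.1, hx.2, hx'.1, hx'.2])
      (by linarith [hy.1, hy.2, hy'.1, hy'.2]) (by linarith [hy.1, hy.2, hy'.1, hy'.2])
      (by nlinarith [key1]) key2
  -- column exclusion: two cells in column i two rows apart, plus a cell 2 columns away
  have hcol : ∀ i j j' i'' j'' : ℤ, (i, j) ∈ S → (i, j') ∈ S → j + 2 ≤ j' →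
      (i'', j'') ∈ S → (i + 2 ≤ i'' ∨ i'' + 2 ≤ i) → False := by
    rintro i j j' i'' j'' ⟨xp, yp, hxp, hyp, hP1, hP2⟩ ⟨xq, yq, hxq, hyq, hQ1, hQ2⟩ hjj
      ⟨xw, yw, hxw, hyw, hW1, hW2⟩ hii
    simp only [Set.mem_Ioo] at hP1 hP2 hQ1 hQ2 hW1 hW2
    have hjj' : (j : ℝ) + 2 ≤ (j' : ℝ) := by exact_mod_cast hjj
    have hQP2 : 1 < s * (xq - xp) + c * (yq - yp) := by linarith [hP2.2, hQ2.1]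
    rcases hii with h | h
    · have h' : (i : ℝ) + 2 ≤ (i'' : ℝ) := by exact_mod_cast h
      exact core' c s (xw - xp) (yw - yp) (xw - xq) (yw - yq) hc
        (by linarith [hxw.1, hxw.2, hxp.1, hxp.2]) (by linarith [hxw.1, hxw.2, hxp.1, hxp.2])
        (by linarith [hyw.1, hyw.2, hyp.1, hyp.2]) (by linarith [hyw.1, hyw.2, hyp.1, hyp.2])
        (by linarith [hxw.1, hxw.2, hxq.1, hxq.2]) (by linarith [hxw.1, hxw.2, hxq.1, hxq.2])
        (by linarith [hyw.1, hyw.2, hyq.1, hyq.2]) (by linarith [hyw.1, hyw.2, hyq.1, hyq.2])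
        (by linarith [hP1.2, hW1.1]) (by linarith [hQ1.2, hW1.1])
        (by linarith [hQP2])
    · have h' : (i'' : ℝ) + 2 ≤ (i : ℝ) := by exact_mod_cast h
      exact core' c s (xq - xw) (yq - yw) (xp - xw) (yp - yw) hc
        (by linarith [hxw.1, hxw.2, hxq.1, hxq.2]) (by linarith [hxw.1, hxw.2, hxq.1, hxq.2])
        (by linarith [hyw.1, hyw.2, hyq.1, hyq.2]) (by linarith [hyw.1, hyw.2, hyq.1, hyq.2])
        (by linarith [hxw.1, hxw.2, hxp.1, hxp.2]) (by linarith [hxw.1, hxw.2, hxp.1, hxp.2])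
        (by linarith [hyw.1, hyw.2, hyp.1, hyp.2]) (by linarith [hyw.1, hyw.2, hyp.1, hyp.2])
        (by linarith [hW1.2, hQ1.1]) (by linarith [hW1.2, hP1.1])
        (by linarith [hQP2])
  -- row exclusion (transposed)
  have hrow : ∀ i j i' i'' j'' : ℤ, (i, j) ∈ S → (i', j) ∈ S → i + 2 ≤ i' →
      (i'', j'') ∈ S → (j + 2 ≤ j'' ∨ j'' + 2 ≤ j) → False := by
    rintro i j i' i'' j'' ⟨xp, yp, hxp, hyp, hP1, hP2⟩ ⟨xq, yq, hxq, hyq, hQ1, hQ2⟩ hii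
      ⟨xw, yw, hxw, hyw, hW1, hW2⟩ hjj
    simp only [Set.mem_Ioo] at hP1 hP2 hQ1 hQ2 hW1 hW2
    have hii' : (i : ℝ) + 2 ≤ (i' : ℝ) := by exact_mod_cast hii
    have hQP1 : 1 < c * (xq - xp) - s * (yq - yp) := by linarith [hP1.2, hQ1.1]
    have hc' : c^2 + (-s)^2 = 1 := by linear_combination hc
    rcases hjj with h | h
    · have h' : (j : ℝ) + 2 ≤ (j'' : ℝ) := by exact_mod_cast h
      exact core' c (-s) (yw - yp) (xw - xp) (yw - yq) (xw - xq) hc'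
        (by linarith [hyw.1, hyw.2, hyp.1, hyp.2]) (by linarith [hyw.1, hyw.2, hyp.1, hyp.2])
        (by linarith [hxw.1, hxw.2, hxp.1, hxp.2]) (by linarith [hxw.1, hxw.2, hxp.1, hxp.2])
        (by linarith [hyw.1, hyw.2, hyq.1, hyq.2]) (by linarith [hyw.1, hyw.2, hyq.1, hyq.2])
        (by linarith [hxw.1, hxw.2, hxq.1, hxq.2]) (by linarith [hxw.1, hxw.2, hxq.1, hxq.2])
        (by linarith [hP2.2, hW2.1]) (by linarith [hQ2.2, hW2.1])
        (by linarith [hQP1])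
    · have h' : (j'' : ℝ) + 2 ≤ (j : ℝ) := by exact_mod_cast h
      exact core' c (-s) (yq - yw) (xq - xw) (yp - yw) (xp - xw) hc'
        (by linarith [hyw.1, hyw.2, hyq.1, hyq.2]) (by linarith [hyw.1, hyw.2, hyq.1, hyq.2])
        (by linarith [hxw.1, hxw.2, hxq.1, hxq.2]) (by linarith [hxw.1, hxw.2, hxq.1, hxq.2])
        (by linarith [hyw.1, hyw.2, hyp.1, hyp.2]) (by linarith [hyw.1, hyw.2, hyp.1, hyp.2])
        (by linarith [hxw.1, hxw.2, hxp.1, hxp.2]) (by linarith [hxw.1, hxw.2, hxp.1, hxp.2])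
        (by linarith [hW2.2, hQ2.1]) (by linarith [hW2.2, hP2.1])
        (by linarith [hQP1])
  -- case analysis on the four corners of the 3x3 candidate box
  have hmem : ∀ (a b : ℤ) (i j : ℤ), (i, j) ∈ S → i = a → j = b → (a, b) ∈ S := by
    rintro a b i j hij rfl rfl; exact hij
  by_cases h00 : (m, n) ∈ S
  · have h22 : (m + 2, n + 2) ∉ S := fun h =>
      hdiag m n (m + 2) (n + 2) h00 h (by omega) (Or.inl (by omega))
    by_cases h02 : (m, n + 2) ∈ S
    · refine ncard_le_six S (m,n) (m,n+1) (m,n+2) (m+1,n) (m+1,n+1) (m+1,n+2) ?_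
      rintro ⟨i, j⟩ hij
      obtain ⟨hb1, hb2, hb3, hb4⟩ := hbox (i, j) hij
      have hni : ¬ (m + 2 ≤ i) := fun h =>
        hcol m n (n + 2) i j h00 h02 (by omega) hij (Or.inl h)
      simp only [Set.mem_insert_iff, Set.mem_singleton_iff, Prod.mk.injEq]
      omega
    · by_cases h20 : (m + 2, n) ∈ S
      · refine ncard_le_six S (m,n) (m,n+1) (m+1,n) (m+1,n+1) (m+2,n) (m+2,n+1) ?_
        rintro ⟨i, j⟩ hij
        obtain ⟨hb1, hb2, hb3, hb4⟩ := hbox (i, j) hij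
        have hnj : ¬ (n + 2 ≤ j) := fun h =>
          hrow m n (m + 2) i j h00 h20 (by omega) hij (Or.inl h)
        simp only [Set.mem_insert_iff, Set.mem_singleton_iff, Prod.mk.injEq]
        omega
      · refine ncard_le_six S (m,n) (m,n+1) (m+1,n) (m+1,n+1) (m+1,n+2) (m+2,n+1) ?_
        rintro ⟨i, j⟩ hij
        obtain ⟨hb1, hb2, hb3, hb4⟩ := hbox (i, j) hij
        have hne02 : ¬ (i = m ∧ j = n + 2) := fun ⟨h1, h2⟩ => h02 (hmem _ _ _ _ hij h1 h2)
        have hne20 : ¬ (i = m + 2 ∧ j = n) := fun ⟨h1, h2⟩ => h20 (hmem _ _ _ _ hij h1 h2)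
        have hne22 : ¬ (i = m + 2 ∧ j = n + 2) := fun ⟨h1, h2⟩ => h22 (hmem _ _ _ _ hij h1 h2)
        simp only [Set.mem_insert_iff, Set.mem_singleton_iff, Prod.mk.injEq]
        omega
  · by_cases h22 : (m + 2, n + 2) ∈ S
    · by_cases h20 : (m + 2, n) ∈ S
      · refine ncard_le_six S (m+1,n) (m+1,n+1) (m+1,n+2) (m+2,n) (m+2,n+1) (m+2,n+2) ?_
        rintro ⟨i, j⟩ hij
        obtain ⟨hb1, hb2, hb3, hb4⟩ := hbox (i, j) hij
        have hni : ¬ (i + 2 ≤ m + 2) := fun h =>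
          hcol (m + 2) n (n + 2) i j h20 h22 (by omega) hij (Or.inr h)
        simp only [Set.mem_insert_iff, Set.mem_singleton_iff, Prod.mk.injEq]
        omega
      · by_cases h02 : (m, n + 2) ∈ S
        · refine ncard_le_six S (m,n+1) (m,n+2) (m+1,n+1) (m+1,n+2) (m+2,n+1) (m+2,n+2) ?_
          rintro ⟨i, j⟩ hij
          obtain ⟨hb1, hb2, hb3, hb4⟩ := hbox (i, j) hij
          have hnj : ¬ (j + 2 ≤ n + 2) := fun h =>
            hrow m (n + 2) (m + 2) i j h02 h22 (by omega) hij (Or.inr h)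
          simp only [Set.mem_insert_iff, Set.mem_singleton_iff, Prod.mk.injEq]
          omega
        · refine ncard_le_six S (m,n+1) (m+1,n) (m+1,n+1) (m+1,n+2) (m+2,n+1) (m+2,n+2) ?_
          rintro ⟨i, j⟩ hij
          obtain ⟨hb1, hb2, hb3, hb4⟩ := hbox (i, j) hij
          have hne00 : ¬ (i = m ∧ j = n) := fun ⟨h1, h2⟩ => h00 (hmem _ _ _ _ hij h1 h2)
          have hne20 : ¬ (i = m + 2 ∧ j = n) := fun ⟨h1, h2⟩ => h20 (hmem _ _ _ _ hij h1 h2)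
          have hne02 : ¬ (i = m ∧ j = n + 2) := fun ⟨h1, h2⟩ => h02 (hmem _ _ _ _ hij h1 h2)
          simp only [Set.mem_insert_iff, Set.mem_singleton_iff, Prod.mk.injEq]
          omega
    · by_cases h02 : (m, n + 2) ∈ S
      · have h20 : (m + 2, n) ∉ S := fun h =>
          hdiag m (n + 2) (m + 2) n h02 h (by omega) (Or.inr (by omega))
        refine ncard_le_six S (m,n+1) (m,n+2) (m+1,n) (m+1,n+1) (m+1,n+2) (m+2,n+1) ?_
        rintro ⟨i, j⟩ hij
        obtain ⟨hb1, hb2, hb3, hb4⟩ := hbox (i, j) hij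
        have hne00 : ¬ (i = m ∧ j = n) := fun ⟨h1, h2⟩ => h00 (hmem _ _ _ _ hij h1 h2)
        have hne20 : ¬ (i = m + 2 ∧ j = n) := fun ⟨h1, h2⟩ => h20 (hmem _ _ _ _ hij h1 h2)
        have hne22 : ¬ (i = m + 2 ∧ j = n + 2) := fun ⟨h1, h2⟩ => h22 (hmem _ _ _ _ hij h1 h2)
        simp only [Set.mem_insert_iff, Set.mem_singleton_iff, Prod.mk.injEq]
        omega
      · refine ncard_le_six S (m,n+1) (m+1,n) (m+1,n+1) (m+1,n+2) (m+2,n) (m+2,n+1) ?_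
        rintro ⟨i, j⟩ hij
        obtain ⟨hb1, hb2, hb3, hb4⟩ := hbox (i, j) hij
        have hne00 : ¬ (i = m ∧ j = n) := fun ⟨h1, h2⟩ => h00 (hmem _ _ _ _ hij h1 h2)
        have hne02 : ¬ (i = m ∧ j = n + 2) := fun ⟨h1, h2⟩ => h02 (hmem _ _ _ _ hij h1 h2)
        have hne22 : ¬ (i = m + 2 ∧ j = n + 2) := fun ⟨h1, h2⟩ => h22 (hmem _ _ _ _ hij h1 h2)
        simp only [Set.mem_insert_iff, Set.mem_singleton_iff, Prod.mk.injEq]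
        omega


lemma main2 (tx ty : ℝ) :
    {p : ℤ × ℤ | ∃ x y : ℝ, x ∈ Set.Ioo (0 : ℝ) 1 ∧ y ∈ Set.Ioo (0 : ℝ) 1 ∧
        x + tx ∈ Set.Ioo (p.1 : ℝ) ((p.1 : ℝ) + 1) ∧
        y + ty ∈ Set.Ioo (p.2 : ℝ) ((p.2 : ℝ) + 1)}.ncard ≤ 4 := by
  set m : ℤ := ⌊tx⌋ with hm
  set n : ℤ := ⌊ty⌋ with hn
  refine ncard_le_four _ (m, n) (m, n + 1) (m + 1, n) (m + 1, n + 1) ?_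
  rintro ⟨i, j⟩ ⟨x, y, hx, hy, h1, h2⟩
  simp only [Set.mem_Ioo] at h1 h2
  have hm1 : (m : ℝ) ≤ tx := Int.floor_le _
  have hm2 : tx < (m : ℝ) + 1 := Int.lt_floor_add_one _
  have hn1 : (n : ℝ) ≤ ty := Int.floor_le _
  have hn2 : ty < (n : ℝ) + 1 := Int.lt_floor_add_one _
  have hi1 : m ≤ i := by
    have : (m : ℝ) < (i : ℝ) + 1 := by linarith [h1.2, hx.1]
    have : (m : ℝ) < ((i + 1 : ℤ) : ℝ) := by push_cast; linarith
    have := (by exact_mod_cast this : m < i + 1); omega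
  have hi2 : i ≤ m + 1 := by
    have : (i : ℝ) < (m : ℝ) + 2 := by linarith [h1.1, hx.2]
    have : (i : ℝ) < ((m + 2 : ℤ) : ℝ) := by push_cast; linarith
    have := (by exact_mod_cast this : i < m + 2); omega
  have hj1 : n ≤ j := by
    have : (n : ℝ) < (j : ℝ) + 1 := by linarith [h2.2, hy.1]
    have : (n : ℝ) < ((j + 1 : ℤ) : ℝ) := by push_cast; linarith
    have := (by exact_mod_cast this : n < j + 1); omega
  have hj2 : j ≤ n + 1 := by
    have : (j : ℝ) < (n : ℝ) + 2 := by linarith [h2.1, hy.2]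
    have : (j : ℝ) < ((n + 2 : ℤ) : ℝ) := by push_cast; linarith
    have := (by exact_mod_cast this : j < n + 2); omega
  simp only [Set.mem_insert_iff, Set.mem_singleton_iff, Prod.mk.injEq]
  omega

/-- A unit square placed arbitrarily (rotated and translated) intersects the
interiors of at most 6 cells of the unit grid; if it is only translated
(unrotated) it intersects at most 4 cells. -/
theorem unit_square_meets_at_most_six_cells :
    (∀ θ tx ty : ℝ,
      {c : ℤ × ℤ | ∃ x y : ℝ, x ∈ Set.Ioo (0 : ℝ) 1 ∧ y ∈ Set.Ioo (0 : ℝ) 1 ∧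
        Real.cos θ * x - Real.sin θ * y + tx ∈ Set.Ioo (c.1 : ℝ) ((c.1 : ℝ) + 1) ∧
        Real.sin θ * x + Real.cos θ * y + ty ∈ Set.Ioo (c.2 : ℝ) ((c.2 : ℝ) + 1)}.ncard
        ≤ 6) ∧
    (∀ tx ty : ℝ,
      {c : ℤ × ℤ | ∃ x y : ℝ, x ∈ Set.Ioo (0 : ℝ) 1 ∧ y ∈ Set.Ioo (0 : ℝ) 1 ∧
        x + tx ∈ Set.Ioo (c.1 : ℝ) ((c.1 : ℝ) + 1) ∧
        y + ty ∈ Set.Ioo (c.2 : ℝ) ((c.2 : ℝ) + 1)}.ncard ≤ 4) := by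
  constructor
  · intro θ tx ty
    exact main1 (Real.cos θ) (Real.sin θ) tx ty (Real.cos_sq_add_sin_sq θ)
  · intro tx ty
    exact main2 tx ty
end
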